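/- With the notation of the context, n̂_1 ≤ |π| + ∑_{l=2}^N n̂_l. -/

import Mathlib

open scoped BigOperators

/-!
Let `i` be the site carrying the head `n̂_1 = ⟨i⟩`, say a particle of `α`. Removing it from the
momentum gives `i = π - ∑_{α without i} j + ∑_β j`, so `|i| ≤ |π| + ∑_{l ≥ 2} |j_l|` by the
triangle inequality, and `|j| ≤ ⟨j⟩`. The case `⟨i⟩ = 1` is covered because `N ≥ 2` leaves at
least one further weight, and every weight is at least `1`.
-/

/-- `⟨j⟩ := max(|j|,1)` as a real number. -/
noncomputable def jap (j : ℤ) : ℝ := max (|(j : ℝ)|) 1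

theorem Finsupp.sum_map_toMultiset {α M : Type*} [AddCommMonoid M] (f : α →₀ ℕ) (g : α → M) :
    (f.toMultiset.map g).sum = f.sum fun a n => n • g a := by
  rw [Finsupp.toMultiset_map, Finsupp.sum_toMultiset,
    Finsupp.sum_mapDomain_index (by simp) (by simp [add_nsmul])]

theorem Finsupp.card_toMultiset_add {ι : Type*} (α β : ι →₀ ℕ) :
    Multiset.card (α + β).toMultiset = (α.sum fun _ n => n) + β.sum fun _ n => n := by
  rw [Finsupp.toMultiset_add, Multiset.card_add, Finsupp.card_toMultiset,
    Finsupp.card_toMultiset]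
  rfl

theorem sum_support_union_mul_sub (α β : ℤ →₀ ℕ) :
    ∑ i ∈ α.support ∪ β.support, (i : ℝ) * ((α i : ℝ) - (β i : ℝ)) =
      (α.toMultiset.map ((↑) : ℤ → ℝ)).sum - (β.toMultiset.map ((↑) : ℤ → ℝ)).sum := by
  rw [Finsupp.sum_map_toMultiset, Finsupp.sum_map_toMultiset,
    Finsupp.sum_of_support_subset α Finset.subset_union_left _ (by simp),
    Finsupp.sum_of_support_subset β Finset.subset_union_right _ (by simp),
    ← Finset.sum_sub_distrib]
  refine Finset.sum_congr rfl fun i _ => ?_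
  simp only [nsmul_eq_mul]
  ring

section LinearOrderedAddCommGroup

variable {G : Type*} [AddCommGroup G] [LinearOrder G] [IsOrderedAddMonoid G]

theorem abs_le_abs_sum_sub_sum_add_sum_abs {A B R : Multiset G} {x : G} (h : x ::ₘ R = A + B) :
    |x| ≤ |A.sum - B.sum| + (R.map abs).sum := by
  wlog hxA : x ∈ A generalizing A B
  · have hxB : x ∈ B := (Multiset.mem_add.1 (h ▸ Multiset.mem_cons_self x R)).resolve_left hxA
    rw [abs_sub_comm]
    exact this (h.trans (add_comm A B)) hxB
  obtain ⟨A', rfl⟩ := Multiset.exists_cons_of_mem hxA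
  have hR : R = A' + B := by rwa [Multiset.cons_add, Multiset.cons_inj_right] at h
  have hx : x = ((x ::ₘ A').sum - B.sum) - A'.sum + B.sum := by
    rw [Multiset.sum_cons]; abel
  calc |x| = |((x ::ₘ A').sum - B.sum) - A'.sum + B.sum| := congrArg abs hx
    _ ≤ |(x ::ₘ A').sum - B.sum| + |A'.sum| + |B.sum| :=
        (abs_add_le _ _).trans (add_le_add_left (abs_sub _ _) _)
    _ ≤ |(x ::ₘ A').sum - B.sum| + (A'.map abs).sum + (B.map abs).sum := by
        gcongr <;> exact Multiset.abs_sum_le_sum_abs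
    _ = |(x ::ₘ A').sum - B.sum| + (R.map abs).sum := by
        rw [hR, Multiset.map_add, Multiset.sum_add, add_assoc]

end LinearOrderedAddCommGroup

theorem List.exists_headI_eq_and_drop_one_eq_of_coe_eq_map {α β : Type*} [Inhabited β]
    [DecidableEq α] {L : List β} {M : Multiset α} {f : α → β} (hL : (L : Multiset β) = M.map f)
    (hne : L ≠ []) : ∃ i ∈ M, L.headI = f i ∧ (L.drop 1 : Multiset β) = (M.erase i).map f := by
  obtain ⟨a, t, rfl⟩ := List.exists_cons_of_ne_nil hne
  obtain ⟨i, hi, rfl⟩ := Multiset.mem_map.1 (hL ▸ Multiset.mem_coe.2 List.mem_cons_self)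
  refine ⟨i, hi, rfl, ?_⟩
  rw [← Multiset.cons_coe, ← Multiset.cons_erase hi, Multiset.map_cons] at hL
  exact Multiset.cons_inj_right _ |>.1 hL

theorem abs_le_jap (j : ℤ) : |(j : ℝ)| ≤ jap j := le_max_left _ _

theorem one_le_jap (j : ℤ) : 1 ≤ jap j := le_max_right _ _

theorem jap_nonneg (j : ℤ) : 0 ≤ jap j := zero_le_one.trans (one_le_jap j)

theorem one_le_sum_map_jap {R : Multiset ℤ} (hR : R ≠ 0) : 1 ≤ (R.map jap).sum := by
  obtain ⟨i, hi⟩ := Multiset.exists_mem_of_ne_zero hR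
  obtain ⟨R', rfl⟩ := Multiset.exists_cons_of_mem hi
  rw [Multiset.map_cons, Multiset.sum_cons]
  have hR' : 0 ≤ (R'.map jap).sum :=
    Multiset.sum_nonneg fun _ hj => (Multiset.mem_map.1 hj).elim fun k hk => hk.2 ▸ jap_nonneg k
  linarith [one_le_jap i]

theorem jap_le_of_abs_le {x : ℤ} {R : Multiset ℤ} {c : ℝ} (hR : R ≠ 0)
    (h : |(x : ℝ)| ≤ c + (R.map fun i : ℤ => |(i : ℝ)|).sum) (hc : 0 ≤ c) :
    jap x ≤ c + (R.map jap).sum := by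
  have hdom : (R.map fun i : ℤ => |(i : ℝ)|).sum ≤ (R.map jap).sum :=
    Multiset.sum_map_le_sum_map _ _ fun j _ => abs_le_jap j
  exact max_le (h.trans (by linarith)) (by linarith [one_le_sum_map_jap hR])

theorem nhat_one_le_pi_add_sum_general
    (α β : ℤ →₀ ℕ)
    (hmass : (α.sum fun _ n => n) = β.sum fun _ n => n)
    (hmass1 : 1 ≤ α.sum fun _ n => n)
    (L : List ℝ)
    (hL : (L : Multiset ℝ) = Multiset.map jap (α + β).toMultiset)
    (π : ℝ)
    (hπ : π = ∑ i ∈ α.support ∪ β.support, (i : ℝ) * ((α i : ℝ) - (β i : ℝ))) :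
    L.headI ≤ |π| + (L.drop 1).sum := by
  set M := (α + β).toMultiset with hM
  have hcard : 2 ≤ Multiset.card M := by rw [Finsupp.card_toMultiset_add]; omega
  have hne : L ≠ [] := by
    rintro rfl
    simp [← Multiset.card_map jap M, ← hL] at hcard
  obtain ⟨i, hi, hhead, hdrop⟩ := List.exists_headI_eq_and_drop_one_eq_of_coe_eq_map hL hne
  have hR : M.erase i ≠ 0 := by
    rw [← Multiset.card_pos, Multiset.card_erase_of_mem hi, Nat.pred_eq_sub_one]
    omega
  have hsplit : (i : ℝ) ::ₘ (M.erase i).map (↑) =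
      α.toMultiset.map (↑) + β.toMultiset.map (↑) := by
    rw [← Multiset.map_cons, Multiset.cons_erase hi, hM, Finsupp.toMultiset_add, Multiset.map_add]
  have hi_le : |(i : ℝ)| ≤ |π| + ((M.erase i).map fun j : ℤ => |(j : ℝ)|).sum := by
    simpa only [hπ, sum_support_union_mul_sub, Multiset.map_map, Function.comp_def] using
      abs_le_abs_sum_sub_sum_add_sum_abs hsplit
  rw [hhead, ← Multiset.sum_coe, hdrop]
  exact jap_le_of_abs_le hR hi_le (abs_nonneg π)

/-- With `n̂` the decreasing rearrangement of the multiset containing each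
`⟨i⟩` with multiplicity `α_i + β_i` (encoded by a sorted list `L`), one has
`n̂_1 ≤ |π| + ∑_{l≥2} n̂_l`. -/
theorem nhat_one_le_pi_add_sum
    (α β : ℤ →₀ ℕ)
    (hmass : (α.sum fun _ n => n) = β.sum fun _ n => n)
    (hmass1 : 1 ≤ α.sum fun _ n => n)
    (L : List ℝ) (hsort : L.Pairwise (· ≥ ·))
    (hL : (L : Multiset ℝ) = Multiset.map jap (α + β).toMultiset)
    (π : ℝ)
    (hπ : π = ∑ i ∈ α.support ∪ β.support, (i : ℝ) * ((α i : ℝ) - (β i : ℝ))) :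
    L.headI ≤ |π| + (L.drop 1).sum :=
  nhat_one_le_pi_add_sum_general α β hmass hmass1 L hL π hπ
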